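/- arXiv:2408.00036 — 2 statements merged into one kernel-verified Lean document; each statement's English description precedes it below -/
import Mathlib

section
/- Let α > 0 and C > 0 be real numbers, let x = (x₁,x₂) ∈ ℝ² with x ≠ 0, and let λ < 0 with x₁ > λ. Let D₁, D₂ be real numbers with D₂ > 0, D₁ − D₂ ≥ C·(x₁ − λ), C·(x₁ − λ) ≤ D₂, and C·|x|² ≥ 8α·|λ|·D₂. Then 2α·log|x| + log D₁ ≥ 2α·log|x_λ| + log D₂, where x_λ = (2λ − x₁, x₂) and |·| is the Euclidean norm. -/
/-!
Squaring removes the square roots, so the claim reads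
`α (log |x_λ|² - log |x|²) ≤ log D₁ - log D₂`. Since `|x_λ|² - |x|² = -4λ(x₁ - λ)`, concavity of
`log` bounds the left side by `4α|λ|(x₁ - λ)/|x|²`, which the hypothesis on `|x|²` makes at most
`c/(2D₂)` with `c = C(x₁ - λ)`. On the other side `D₁ ≥ D₂ + c` with `c ≤ D₂`, so
`log D₁ - log D₂ ≥ 1 - D₂/D₁ ≥ c/(D₂ + c) ≥ c/(2D₂)`.
-/

open Real

lemma Real.log_sub_log_le_div_sub_one {a b : ℝ} (ha : 0 < a) (hb : 0 < b) :
    log b - log a ≤ b / a - 1 := by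
  rw [← log_div hb.ne' ha.ne']
  exact log_le_sub_one_of_pos (div_pos hb ha)

lemma Real.one_sub_div_le_log_sub_log {a b : ℝ} (ha : 0 < a) (hb : 0 < b) :
    1 - a / b ≤ log b - log a := by
  rw [← log_div hb.ne' ha.ne', ← inv_div]
  exact one_sub_inv_le_log_of_pos (div_pos hb ha)

lemma reflect_normSq_sub_normSq (x₁ x₂ lam : ℝ) :
    ((2 * lam - x₁) ^ 2 + x₂ ^ 2) - (x₁ ^ 2 + x₂ ^ 2) = 4 * -lam * (x₁ - lam) := by
  ring

lemma log_reflect_normSq_sub_log_normSq_le {x₁ x₂ lam : ℝ} (hx : 0 < x₁ ^ 2 + x₂ ^ 2)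
    (hlam : lam ≤ 0) (hx₁ : lam ≤ x₁) :
    log ((2 * lam - x₁) ^ 2 + x₂ ^ 2) - log (x₁ ^ 2 + x₂ ^ 2)
      ≤ 4 * |lam| * (x₁ - lam) / (x₁ ^ 2 + x₂ ^ 2) := by
  have hdiff := reflect_normSq_sub_normSq x₁ x₂ lam
  have hs : 0 < (2 * lam - x₁) ^ 2 + x₂ ^ 2 := by
    nlinarith [mul_nonneg (neg_nonneg.mpr hlam) (sub_nonneg.mpr hx₁)]
  calc log ((2 * lam - x₁) ^ 2 + x₂ ^ 2) - log (x₁ ^ 2 + x₂ ^ 2)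
      ≤ ((2 * lam - x₁) ^ 2 + x₂ ^ 2) / (x₁ ^ 2 + x₂ ^ 2) - 1 :=
        log_sub_log_le_div_sub_one hx hs
    _ = 4 * -lam * (x₁ - lam) / (x₁ ^ 2 + x₂ ^ 2) := by
        rw [← hdiff, sub_div, div_self hx.ne']
    _ = 4 * |lam| * (x₁ - lam) / (x₁ ^ 2 + x₂ ^ 2) := by rw [abs_of_nonpos hlam]

lemma div_two_mul_le_log_sub_log {c D₁ D₂ : ℝ} (hD₂ : 0 < D₂) (hc : 0 ≤ c) (hcD₂ : c ≤ D₂)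
    (hD₁ : D₂ + c ≤ D₁) :
    c / (2 * D₂) ≤ log D₁ - log D₂ := by
  calc c / (2 * D₂) ≤ c / (D₂ + c) := by gcongr; linarith
    _ = 1 - D₂ / (D₂ + c) := by field_simp; ring
    _ ≤ 1 - D₂ / D₁ := by gcongr
    _ ≤ log D₁ - log D₂ := one_sub_div_le_log_sub_log hD₂ (by linarith)

/-- Let `α > 0` and `C > 0`, `x = (x₁, x₂) ∈ ℝ²` with `x ≠ 0`, `λ < 0` with
`x₁ > λ`. Let `D₁, D₂` satisfy `D₂ > 0`, `D₁ − D₂ ≥ C(x₁ − λ)`,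
`C(x₁ − λ) ≤ D₂` and `C|x|² ≥ 8α|λ|D₂`. Then
`2α·log|x| + log D₁ ≥ 2α·log|x_λ| + log D₂`, where `x_λ = (2λ − x₁, x₂)` and
`|·|` is the Euclidean norm. -/
theorem key_inequality_log (α C x₁ x₂ lam D₁ D₂ : ℝ) (hα : 0 < α) (hC : 0 < C)
    (hx : (x₁, x₂) ≠ (0, 0)) (hlam : lam < 0) (hx₁ : x₁ > lam)
    (hD₂ : 0 < D₂) (hdiff : D₁ - D₂ ≥ C * (x₁ - lam))
    (hsmall : C * (x₁ - lam) ≤ D₂)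
    (hbig : C * Real.sqrt (x₁ ^ 2 + x₂ ^ 2) ^ 2 ≥ 8 * α * |lam| * D₂) :
    2 * α * Real.log (Real.sqrt (x₁ ^ 2 + x₂ ^ 2)) + Real.log D₁
      ≥ 2 * α * Real.log (Real.sqrt ((2 * lam - x₁) ^ 2 + x₂ ^ 2)) + Real.log D₂ := by
  have hr : 0 < x₁ ^ 2 + x₂ ^ 2 := by
    have hne : x₁ ≠ 0 ∨ x₂ ≠ 0 := by
      contrapose! hx
      simp [hx.1, hx.2]
    rcases hne with h | h <;> positivity
  have hgap : 0 < x₁ - lam := sub_pos.mpr hx₁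
  rw [sq_sqrt hr.le] at hbig
  rw [log_sqrt hr.le, log_sqrt (by positivity)]
  have hreflect := log_reflect_normSq_sub_log_normSq_le hr hlam.le hx₁.le
  have hweight :
      α * (4 * |lam| * (x₁ - lam) / (x₁ ^ 2 + x₂ ^ 2)) ≤ C * (x₁ - lam) / (2 * D₂) := by
    rw [← mul_div_assoc, div_le_div_iff₀ hr (by positivity)]
    nlinarith [mul_le_mul_of_nonneg_left hbig hgap.le]
  have hD : C * (x₁ - lam) / (2 * D₂) ≤ log D₁ - log D₂ :=
    div_two_mul_le_log_sub_log hD₂ (mul_pos hC hgap).le hsmall (by linarith)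
  linarith [mul_le_mul_of_nonneg_left hreflect hα.le]
end

section
/- Let α > 0 and C > 0 be real numbers, let x = (x₁,x₂) ∈ ℝ² with x ≠ 0, and let λ < 0 with x₁ > λ. Let D₁, D₂ be real numbers with D₂ > 0, D₁ − D₂ ≥ C·(x₁ − λ), C·(x₁ − λ) ≤ D₂, and C·|x|² ≥ 8α·|λ|·D₂. Then |x|^{2α}·D₁ ≥ |x_λ|^{2α}·D₂; equivalently, |x|^{2α}·(−D₁) ≤ |x_λ|^{2α}·(−D₂), where x_λ = (2λ − x₁, x₂), |·| is the Euclidean norm, and powers are real powers. -/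
/-!
Write `r = |x|²`. Reflection across `{x₁ = λ}` with `λ < 0 < x₁ - λ` only moves `x` away from the
origin: `|x_λ|² = r + d` with `d = 4|λ|(x₁ - λ)`. For `t = α d / r` the hypotheses give
`2 t D₂ ≤ C (x₁ - λ) ≤ D₂`, so `t ≤ 1/2`, and on that range
`(1 + d/r)^α ≤ exp t ≤ 1 + 2t`. Hence `|x_λ|^{2α} D₂ ≤ r^α (D₂ + C (x₁ - λ)) ≤ |x|^{2α} D₁`.
-/

namespace Real

theorem exp_le_one_add_two_mul {t : ℝ} (ht₀ : 0 ≤ t) (ht : t ≤ 1 / 2) : exp t ≤ 1 + 2 * t := by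
  calc exp t ≤ 1 / (1 - t) := exp_bound_div_one_sub_of_interval ht₀ (by linarith)
    _ ≤ 1 + 2 * t := by rw [div_le_iff₀ (by linarith)]; nlinarith

theorem one_add_rpow_le_exp {u : ℝ} (hu : -1 ≤ u) {α : ℝ} (hα : 0 ≤ α) :
    (1 + u) ^ α ≤ exp (u * α) := by
  rw [exp_mul]
  exact rpow_le_rpow (by linarith) (by linarith [add_one_le_exp u]) hα

theorem add_rpow_le_rpow_mul_one_add {r d α : ℝ} (hr : 0 < r) (hd : 0 ≤ d) (hα : 0 ≤ α)
    (hαd : 2 * (α * d) ≤ r) : (r + d) ^ α ≤ r ^ α * (1 + 2 * (α * d / r)) := by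
  have hu : 0 ≤ d / r := div_nonneg hd hr.le
  have ht : α * d / r ≤ 1 / 2 := by rw [div_le_iff₀ hr]; linarith
  calc (r + d) ^ α = r ^ α * (1 + d / r) ^ α := by
        rw [← mul_rpow hr.le (by linarith), mul_one_add, mul_div_cancel₀ _ hr.ne']
    _ ≤ r ^ α * exp (α * d / r) := by
        gcongr
        rw [mul_div_assoc, mul_comm]
        exact one_add_rpow_le_exp (by linarith) hα
    _ ≤ r ^ α * (1 + 2 * (α * d / r)) := by
        gcongr
        exact exp_le_one_add_two_mul (by positivity) ht

theorem sqrt_rpow_two_mul {r : ℝ} (hr : 0 ≤ r) (α : ℝ) : √r ^ (2 * α) = r ^ α := by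
  rw [sqrt_eq_rpow, ← rpow_mul hr]
  ring_nf

end Real

theorem sq_reflect_add_sq (x₁ x₂ lam : ℝ) :
    (2 * lam - x₁) ^ 2 + x₂ ^ 2 = x₁ ^ 2 + x₂ ^ 2 + 4 * (-lam) * (x₁ - lam) := by
  ring

theorem key_inequality_mul_general (α C x₁ x₂ lam D₁ D₂ : ℝ) (hα : 0 < α)
    (hlam : lam < 0) (hx₁ : x₁ > lam)
    (hD₂ : 0 < D₂) (hdiff : D₁ - D₂ ≥ C * (x₁ - lam))
    (hsmall : C * (x₁ - lam) ≤ D₂)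
    (hbig : C * Real.sqrt (x₁ ^ 2 + x₂ ^ 2) ^ 2 ≥ 8 * α * |lam| * D₂) :
    Real.sqrt (x₁ ^ 2 + x₂ ^ 2) ^ (2 * α) * D₁
        ≥ Real.sqrt ((2 * lam - x₁) ^ 2 + x₂ ^ 2) ^ (2 * α) * D₂ ∧
      Real.sqrt (x₁ ^ 2 + x₂ ^ 2) ^ (2 * α) * (-D₁)
        ≤ Real.sqrt ((2 * lam - x₁) ^ 2 + x₂ ^ 2) ^ (2 * α) * (-D₂) := by
  set r := x₁ ^ 2 + x₂ ^ 2
  set d := 4 * (-lam) * (x₁ - lam)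
  have hr₀ : 0 ≤ r := by positivity
  rw [Real.sq_sqrt hr₀, abs_of_neg hlam] at hbig
  have hd : 0 ≤ d := mul_nonneg (by linarith) (by linarith)
  have hr : 0 < r := hr₀.lt_of_ne' fun h ↦ by
    rw [h, mul_zero] at hbig
    nlinarith [mul_pos (mul_pos hα (neg_pos.2 hlam)) hD₂]
  have hgrowth : 2 * (α * d) * D₂ ≤ r * (C * (x₁ - lam)) := by
    nlinarith [mul_le_mul_of_nonneg_left hbig (sub_nonneg.2 hx₁.le)]
  have hmain : (r + d) ^ α * D₂ ≤ r ^ α * D₁ := calc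
    (r + d) ^ α * D₂ ≤ r ^ α * (1 + 2 * (α * d / r)) * D₂ := by
      gcongr
      exact Real.add_rpow_le_rpow_mul_one_add hr hd hα.le (by nlinarith)
    _ = r ^ α * (D₂ + 2 * (α * d) * D₂ / r) := by ring
    _ ≤ r ^ α * D₁ := by
      gcongr
      linarith [(div_le_iff₀ hr).2 (hgrowth.trans_eq (mul_comm _ _))]
  rw [sq_reflect_add_sq, Real.sqrt_rpow_two_mul hr₀, Real.sqrt_rpow_two_mul (by positivity)]
  exact ⟨hmain, by linarith⟩

/-- Let `α > 0` and `C > 0`, `x = (x₁, x₂) ∈ ℝ²` with `x ≠ 0`, `λ < 0` with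
`x₁ > λ`. Let `D₁, D₂` satisfy `D₂ > 0`, `D₁ − D₂ ≥ C(x₁ − λ)`,
`C(x₁ − λ) ≤ D₂` and `C|x|² ≥ 8α|λ|D₂`. Then `|x|^(2α)·D₁ ≥ |x_λ|^(2α)·D₂`;
equivalently `|x|^(2α)·(−D₁) ≤ |x_λ|^(2α)·(−D₂)`, where `x_λ = (2λ − x₁, x₂)`,
`|·|` is the Euclidean norm, and powers are real powers. -/
theorem key_inequality_mul (α C x₁ x₂ lam D₁ D₂ : ℝ) (hα : 0 < α) (hC : 0 < C)
    (hx : (x₁, x₂) ≠ (0, 0)) (hlam : lam < 0) (hx₁ : x₁ > lam)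
    (hD₂ : 0 < D₂) (hdiff : D₁ - D₂ ≥ C * (x₁ - lam))
    (hsmall : C * (x₁ - lam) ≤ D₂)
    (hbig : C * Real.sqrt (x₁ ^ 2 + x₂ ^ 2) ^ 2 ≥ 8 * α * |lam| * D₂) :
    Real.sqrt (x₁ ^ 2 + x₂ ^ 2) ^ (2 * α) * D₁
        ≥ Real.sqrt ((2 * lam - x₁) ^ 2 + x₂ ^ 2) ^ (2 * α) * D₂ ∧
      Real.sqrt (x₁ ^ 2 + x₂ ^ 2) ^ (2 * α) * (-D₁)
        ≤ Real.sqrt ((2 * lam - x₁) ^ 2 + x₂ ^ 2) ^ (2 * α) * (-D₂) :=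
  key_inequality_mul_general α C x₁ x₂ lam D₁ D₂ hα hlam hx₁ hD₂ hdiff hsmall hbig
end
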